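/- arXiv:0908.4572 — 7 statements merged into one kernel-verified Lean document; each statement's English description precedes it below -/
import Mathlib

section
/- Let G be a graph obtained as follows: A is an independent set of 2m vertices, B is a graph consisting of m+1 disjoint edges (so 2m+2 vertices), and all edges between A and B are present. Then G is a graph on n = 4m+2 vertices with minimum degree 2m+1 = n/2, and G contains at most ⌊(m+1)/2⌋ edge-disjoint Hamilton cycles. -/
/-- The join of an independent set of `2*m` vertices with a perfect matching
on `2*m+2` vertices (the matching pairs `2k` with `2k+1`). -/
def matchJoin (m : ℕ) : SimpleGraph (Fin (2*m) ⊕ Fin (2*m+2)) where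
  Adj x y :=
    match x, y with
    | Sum.inl _, Sum.inl _ => False
    | Sum.inl _, Sum.inr _ => True
    | Sum.inr _, Sum.inl _ => True
    | Sum.inr a, Sum.inr b => a ≠ b ∧ (a : ℕ) / 2 = (b : ℕ) / 2
  symm := by
    constructor
    rintro (a | a) (b | b) h
    · exact h
    · trivial
    · trivial
    · exact ⟨h.1.symm, h.2.symm⟩
  loopless := by
    constructor
    rintro (a | a) h
    · exact h
    · exact h.1 rfl

noncomputable instance (m : ℕ) : DecidableRel (matchJoin m).Adj :=
  Classical.decRel _

/-!
In a Hamilton cycle of `matchJoin m`, each of the `2m` vertices of the independent side is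
the endpoint of exactly two cycle edges and no cycle edge joins two of them, so exactly
`(4m+2) - 2·2m = 2` cycle edges lie inside the matching side. All those edges belong to the
perfect matching, which has `m+1` edges, so edge-disjoint Hamilton cycles number at most
`(m+1)/2`.
-/

open Finset SimpleGraph Function

lemma Finset.card_mul_le_card_of_pairwiseDisjoint {ι α : Type*} [Fintype ι] [DecidableEq α]
    {t : ι → Finset α} {s : Finset α} {k : ℕ} (hd : Pairwise (Disjoint on t))
    (hs : ∀ i, t i ⊆ s) (hk : ∀ i, k ≤ #(t i)) : Fintype.card ι * k ≤ #s :=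
  calc Fintype.card ι * k = ∑ _i : ι, k := by simp
    _ ≤ ∑ i, #(t i) := sum_le_sum fun i _ ↦ hk i
    _ = #(univ.biUnion t) := (card_biUnion fun i _ j _ hij ↦ hd hij).symm
    _ ≤ #s := card_le_card (biUnion_subset.2 fun i _ ↦ hs i)

lemma List.countP_add_countP_add_countP_nor {α : Type*} (l : List α) (p q : α → Bool)
    (hpq : ∀ x ∈ l, ¬ (p x ∧ q x)) :
    l.countP p + l.countP q + l.countP (fun x => !p x && !q x) = l.length := by
  induction l with
  | nil => rfl
  | cons x l ih =>
    have := ih fun y hy => hpq y (List.mem_cons_of_mem x hy)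
    have hx := hpq x List.mem_cons_self
    by_cases hp : p x <;> by_cases hq : q x <;> simp [hp, hq] at hx ⊢ <;> omega

namespace SimpleGraph.Walk

variable {V : Type*} {G : SimpleGraph V} {a : V}

lemma support_dropLast_perm_tail (c : G.Walk a a) : c.support.dropLast.Perm c.support.tail := by
  have h := List.dropLast_concat_getLast c.support_ne_nil
  rw [getLast_support] at h
  rw [← List.perm_cons a]
  exact (List.perm_append_singleton a _).symm.trans (by rw [h, cons_tail_support])

variable [DecidableEq V] {c : G.Walk a a}

lemma IsHamiltonianCycle.countP_mem_support_tail (hc : c.IsHamiltonianCycle) (s : Finset V) :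
    c.support.tail.countP (· ∈ s) = #s := by
  have hnd : c.support.tail.Nodup := by
    simpa [support_tail_of_not_nil _ hc.not_nil] using hc.isHamiltonian_tail.isPath.support_nodup
  rw [List.countP_eq_length_filter, ← List.toFinset_card_of_nodup (hnd.filter _)]
  congr
  ext v
  simpa [support_tail_of_not_nil _ hc.not_nil] using fun _ ↦ hc.isHamiltonian_tail.mem_support v

variable [Fintype V]

lemma IsHamiltonianCycle.card_edges_avoiding_add (hc : c.IsHamiltonianCycle) {s : Finset V}
    (hs : G.IsIndepSet (s : Set V)) :
    #{e ∈ c.edges.toFinset | ∀ v ∈ e, v ∉ s} + 2 * #s = Fintype.card V := by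
  have hfst : c.darts.countP (fun d => d.fst ∈ s) = #s := by
    have h := List.countP_map (p := (· ∈ s)) (f := (·.fst)) (l := c.darts)
    rw [map_fst_darts, (support_dropLast_perm_tail c).countP_eq,
      hc.countP_mem_support_tail] at h
    exact h.symm
  have hsnd : c.darts.countP (fun d => d.snd ∈ s) = #s := by
    have h := List.countP_map (p := (· ∈ s)) (f := (·.snd)) (l := c.darts)
    rw [map_snd_darts, hc.countP_mem_support_tail] at h
    exact h.symm
  have hedges : #{e ∈ c.edges.toFinset | ∀ v ∈ e, v ∉ s}
      = c.darts.countP (fun d => !decide (d.fst ∈ s) && !decide (d.snd ∈ s)) := by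
    have h : {e ∈ c.edges.toFinset | ∀ v ∈ e, v ∉ s}
        = (c.edges.filter fun e => ∀ v ∈ e, v ∉ s).toFinset := by
      ext; simp
    rw [h, List.toFinset_card_of_nodup (hc.edges_nodup.filter _),
      ← List.countP_eq_length_filter, edges, List.countP_map]
    refine List.countP_congr fun d _ => ?_
    simp [Dart.edge]
  -- Each vertex of `s` is the tail of exactly one dart and the head of exactly one,
  -- and no dart has both ends in `s`.
  have hsum := c.darts.countP_add_countP_add_countP_nor (fun d => d.fst ∈ s) (fun d => d.snd ∈ s)
    fun d _ h => hs (by simpa using h.1) (by simpa using h.2) d.adj.ne d.adj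
  rw [length_darts, hc.length_eq] at hsum
  omega

end SimpleGraph.Walk

namespace matchJoin

variable {m : ℕ}

def partner (a : Fin (2*m+2)) : Fin (2*m+2) :=
  ⟨a + 1 - 2 * (a % 2), by omega⟩

@[simp] lemma not_adj_inl_inl (a b : Fin (2*m)) : ¬(matchJoin m).Adj (.inl a) (.inl b) := id

@[simp] lemma adj_inl_inr (a : Fin (2*m)) (b : Fin (2*m+2)) :
    (matchJoin m).Adj (.inl a) (.inr b) := trivial

@[simp] lemma adj_inr_inl (a : Fin (2*m+2)) (b : Fin (2*m)) :
    (matchJoin m).Adj (.inr a) (.inl b) := trivial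

lemma adj_inr_iff (a b : Fin (2*m+2)) :
    (matchJoin m).Adj (.inr a) (.inr b) ↔ b = partner a := by
  change a ≠ b ∧ (a : ℕ) / 2 = b / 2 ↔ _
  simp only [Ne, Fin.ext_iff, partner]
  omega

lemma neighborFinset_inl (a : Fin (2*m)) :
    (matchJoin m).neighborFinset (.inl a) = univ.map .inr := by
  ext (b | b) <;> simp

lemma neighborFinset_inr (a : Fin (2*m+2)) :
    (matchJoin m).neighborFinset (.inr a) = insert (.inr (partner a)) (univ.map .inl) := by
  ext (b | b)
  · simp
  · simp [adj_inr_iff]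

lemma degree_inl (a : Fin (2*m)) : (matchJoin m).degree (.inl a) = 2*m+2 := by
  simp [← card_neighborFinset_eq_degree, neighborFinset_inl]

lemma degree_inr (a : Fin (2*m+2)) : (matchJoin m).degree (.inr a) = 2*m+1 := by
  simp [← card_neighborFinset_eq_degree, neighborFinset_inr]

lemma isIndepSet_inl :
    (matchJoin m).IsIndepSet ↑(univ.map .inl : Finset (Fin (2*m) ⊕ Fin (2*m+2))) := by
  rintro (a | a) ha (b | b) hb - <;> simp_all

def matchingEdges (m : ℕ) : Finset (Sym2 (Fin (2*m) ⊕ Fin (2*m+2))) :=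
  univ.image fun k : Fin (m+1) ↦ s(.inr ⟨2*k, by omega⟩, .inr ⟨2*k+1, by omega⟩)

lemma card_matchingEdges_le : #(matchingEdges m) ≤ m + 1 :=
  card_image_le.trans (by simp)

lemma mem_matchingEdges {e : Sym2 (Fin (2*m) ⊕ Fin (2*m+2))} (he : e ∈ (matchJoin m).edgeSet)
    (hA : ∀ v ∈ e, v ∉ (univ.map .inl : Finset _)) : e ∈ matchingEdges m := by
  induction e with | _ x y => ?_
  rcases x with a | a
  · simp at hA
  rcases y with b | b
  · simp at hA
  obtain ⟨hab, hdiv⟩ : a ≠ b ∧ (a : ℕ) / 2 = b / 2 := he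
  refine mem_image.2 ⟨⟨a / 2, by omega⟩, mem_univ _, ?_⟩
  simp only [Sym2.eq_iff, Sum.inr.injEq, Fin.ext_iff, Ne] at hab ⊢
  omega

end matchJoin

/-- The join `G` of an independent set `A` of `2*m` vertices with a perfect matching `B`
on `2*m+2` vertices is a graph on `n = 4*m+2` vertices with minimum degree
`2*m+1 = n/2`, and it contains at most `⌊(m+1)/2⌋` pairwise edge-disjoint
Hamilton cycles. -/
theorem stmt_0 (m : ℕ) :
    Fintype.card (Fin (2*m) ⊕ Fin (2*m+2)) = 4*m+2 ∧
    (∀ v, 2*m+1 ≤ (matchJoin m).degree v) ∧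
    (∃ v, (matchJoin m).degree v = 2*m+1) ∧
    (∀ (h : ℕ) (v : Fin h → (Fin (2*m) ⊕ Fin (2*m+2)))
      (w : ∀ i, (matchJoin m).Walk (v i) (v i)),
      (∀ i, (w i).IsHamiltonianCycle) →
      (∀ i j, i ≠ j → ∀ e ∈ (w i).edges, e ∉ (w j).edges) →
      h ≤ (m+1)/2) := by
  refine ⟨by simp only [Fintype.card_sum, Fintype.card_fin]; omega, ?_, ⟨.inr 0, matchJoin.degree_inr 0⟩, ?_⟩
  · rintro (a | a)
    · rw [matchJoin.degree_inl]; omega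
    · rw [matchJoin.degree_inr]
  intro h v w hw hdisj
  let A : Finset (Fin (2*m) ⊕ Fin (2*m+2)) := univ.map .inl
  let inside (i : Fin h) := {e ∈ (w i).edges.toFinset | ∀ v ∈ e, v ∉ A}
  have hcard (i : Fin h) : 2 ≤ #(inside i) := by
    have key : #(inside i) + 2 * #A = Fintype.card _ :=
      (hw i).card_edges_avoiding_add matchJoin.isIndepSet_inl
    simp only [A, card_map, card_univ, Fintype.card_fin, Fintype.card_sum] at key
    omega
  have hsub (i : Fin h) : inside i ⊆ matchJoin.matchingEdges m := fun e he ↦ by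
    simp only [inside, mem_filter, List.mem_toFinset] at he
    exact matchJoin.mem_matchingEdges ((w i).edges_subset_edgeSet he.1) he.2
  have hdisjoint : Pairwise (Disjoint on inside) := fun i j hij ↦
    disjoint_left.2 fun e hi hj ↦ by
      simp only [inside, mem_filter, List.mem_toFinset] at hi hj
      exact hdisj i j hij e hi.1 hj.1
  have := card_mul_le_card_of_pairwiseDisjoint hdisjoint hsub hcard
  have := matchJoin.card_matchingEdges_le (m := m)
  simp only [Fintype.card_fin] at *
  omega
end

section
/- Let n, Δ, δ be positive integers with n/2 < δ ≤ Δ ≤ n-1 and 2Δ > n. Let G be the graph formed by the join of an independent set of n - Δ vertices with a (δ + Δ - n)-regular graph on Δ vertices. If G contains an r-factor (a spanning r-regular subgraph), then r ≤ Δ(δ + Δ - n)/(2Δ - n). -/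
/-!
Let `A` be the independent part and `B` the regular part of the join. In an `r`-factor every
vertex of `A` sends all its `r` edges to `B`, so `B` receives exactly `r(n - Δ)` edges from `A`,
and each vertex of `B` has at most `δ + Δ - n` neighbours inside `B`. Summing the degrees over `B`
gives `rΔ ≤ r(n - Δ) + Δ(δ + Δ - n)`, which rearranges to the bound since `2Δ > n`.
-/

/-- The join of an independent set of `a` vertices with a graph `B` on `b` vertices. -/
def joinIndep (a b : ℕ) (B : SimpleGraph (Fin b)) : SimpleGraph (Fin a ⊕ Fin b) where
  Adj x y :=
    match x, y with
    | Sum.inl _, Sum.inl _ => False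
    | Sum.inl _, Sum.inr _ => True
    | Sum.inr _, Sum.inl _ => True
    | Sum.inr u, Sum.inr w => B.Adj u w
  symm := ⟨by
    rintro (u | u) (w | w) h
    · exact h
    · trivial
    · trivial
    · exact B.symm.symm _ _ h⟩
  loopless := ⟨by
    rintro (u | u) h
    · exact h
    · exact B.loopless.irrefl u h⟩

open Finset

namespace SimpleGraph

lemma ncard_neighborSet_eq_degree {V : Type*} (G : SimpleGraph V) (v : V)
    [Fintype (G.neighborSet v)] : (G.neighborSet v).ncard = G.degree v := by
  rw [← card_neighborSet_eq_degree, Set.ncard_eq_toFinset_card', Set.toFinset_card]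

variable {α β : Type*} [Fintype α] [Fintype β] {H : SimpleGraph (α ⊕ β)}
  [DecidableRel H.Adj]

lemma degree_eq_card_adj_inl_add_card_adj_inr (x : α ⊕ β) :
    H.degree x = #{a | H.Adj x (.inl a)} + #{b | H.Adj x (.inr b)} := by
  simp only [← card_neighborFinset_eq_degree, neighborFinset_eq_filter, card_filter,
    Fintype.sum_sum_type]

lemma degree_inr_eq_card_adj_inl_add_degree_comap (b : β) :
    H.degree (.inr b) = #{a | H.Adj (.inr b) (.inl a)} + (H.comap Sum.inr).degree b := by
  rw [degree_eq_card_adj_inl_add_card_adj_inr, ← card_neighborFinset_eq_degree,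
    neighborFinset_eq_filter]
  rfl

lemma mul_card_le_of_isRegularOfDegree {r d : ℕ} (hα : ∀ a a', ¬H.Adj (.inl a) (.inl a'))
    (hβ : ∀ b, (H.comap Sum.inr).degree b ≤ d) (hr : H.IsRegularOfDegree r) :
    r * Fintype.card β ≤ r * Fintype.card α + d * Fintype.card β := by
  have hcross (a : α) : #{b | H.Adj (.inl a) (.inr b)} = r := by
    have := hr (.inl a)
    rwa [degree_eq_card_adj_inl_add_card_adj_inr, filter_false_of_mem fun a' _ => hα a a',
      card_empty, zero_add] at this
  have hinr (b : β) : r ≤ #{a | H.Adj (.inr b) (.inl a)} + d := by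
    rw [← hr (.inr b), degree_inr_eq_card_adj_inl_add_degree_comap]
    exact Nat.add_le_add_left (hβ b) _
  have hdouble :
      ∑ b, #{a | H.Adj (.inr b) (.inl a)} = ∑ a, #{b | H.Adj (.inl a) (.inr b)} := by
    simp_rw [H.adj_comm (.inr _)]
    exact (sum_card_bipartiteAbove_eq_sum_card_bipartiteBelow _).symm
  calc r * Fintype.card β = ∑ _b : β, r := by simp [mul_comm]
    _ ≤ ∑ b, (#{a | H.Adj (.inr b) (.inl a)} + d) := sum_le_sum fun b _ => hinr b
    _ = r * Fintype.card α + d * Fintype.card β := by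
      simp [sum_add_distrib, hdouble, hcross, mul_comm]

end SimpleGraph

open SimpleGraph in
theorem stmt_2_general (n Δ δ : ℕ) (hδ : n < 2*δ) (hΔ : Δ ≤ n - 1) (hΔn : n < 2*Δ)
    (B : SimpleGraph (Fin Δ)) (hB : ∀ u, (B.neighborSet u).ncard = δ + Δ - n)
    (r : ℕ) (H : SimpleGraph (Fin (n - Δ) ⊕ Fin Δ))
    (hH : H ≤ joinIndep (n - Δ) Δ B)
    (hreg : ∀ x, (H.neighborSet x).ncard = r) :
    (r : ℝ) ≤ (Δ : ℝ) * ((δ : ℝ) + (Δ : ℝ) - (n : ℝ)) / (2*(Δ : ℝ) - (n : ℝ)) := by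
  classical
  have hregular : H.IsRegularOfDegree r := fun x => by
    rw [← ncard_neighborSet_eq_degree, hreg]
  have hBdeg (b : Fin Δ) : (H.comap Sum.inr).degree b ≤ δ + Δ - n := by
    rw [← hB b, ncard_neighborSet_eq_degree]
    exact degree_le_of_le fun _ _ h => hH h
  have hcount := mul_card_le_of_isRegularOfDegree (fun _ _ h => hH h) hBdeg hregular
  simp only [Fintype.card_fin] at hcount
  have hcountR : (r : ℝ) * Δ ≤ r * (n - Δ) + (δ + Δ - n) * Δ := by
    have hΔle : Δ ≤ n := by omega
    have hle : n ≤ δ + Δ := by omega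
    exact_mod_cast hcount
  have hpos : (0 : ℝ) < 2 * Δ - n := by
    have : (n : ℝ) < 2 * Δ := by exact_mod_cast hΔn
    linarith
  rw [le_div_iff₀ hpos]
  linarith

/-- Let `n/2 < δ ≤ Δ ≤ n-1` with `2Δ > n`, and let `G` be the join of an independent
set of `n - Δ` vertices with a `(δ + Δ - n)`-regular graph `B` on `Δ` vertices.
If `G` contains an `r`-factor then `r ≤ Δ(δ + Δ - n)/(2Δ - n)`. -/
theorem stmt_2 (n Δ δ : ℕ) (hn : 0 < n) (hδpos : 0 < δ) (hΔpos : 0 < Δ)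
    (hδ : n < 2*δ) (hδΔ : δ ≤ Δ) (hΔ : Δ ≤ n - 1) (hΔn : n < 2*Δ)
    (B : SimpleGraph (Fin Δ)) (hB : ∀ u, (B.neighborSet u).ncard = δ + Δ - n)
    (r : ℕ) (H : SimpleGraph (Fin (n - Δ) ⊕ Fin Δ))
    (hH : H ≤ joinIndep (n - Δ) Δ B)
    (hreg : ∀ x, (H.neighborSet x).ncard = r) :
    (r : ℝ) ≤ (Δ : ℝ) * ((δ : ℝ) + (Δ : ℝ) - (n : ℝ)) / (2*(Δ : ℝ) - (n : ℝ)) :=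
  stmt_2_general n Δ δ hδ hΔ hΔn B hB r H hH hreg
end

section
/- For all positive integers δ, n with n/2 < δ < n, there exists a graph G on n vertices with minimum degree δ such that G contains at most (δ + 2 + √(n(2δ - n)))/4 edge-disjoint Hamilton cycles. -/
/-!
Let `A` be an independent set of `a` vertices joined completely to the `c`-th power of the cycle
`C_m`, where `a + m = n` and `a + 2c = δ ≤ m`. The vertices of the cycle power have degree `δ`,
those of `A` degree `m`. A Hamilton cycle has `n` edges, at most `2a` of them at `A`, so it uses
at least `m - a` of the `mc` edges of the cycle power; hence there are at most `mc / (m - a)`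
edge-disjoint Hamilton cycles. Taking `m - a` to be `⌊√(n(2δ - n))⌋` plus at most `3` makes
this at most `(δ + 2 + √(n(2δ - n))) / 4`.
-/

open SimpleGraph Finset

namespace SimpleGraph.Walk

variable {V : Type*} {G : SimpleGraph V}

lemma IsCycle.card_filter_mem_edges_le_two [DecidableEq V] {u : V} {p : G.Walk u u}
    (hp : p.IsCycle) (x : V) : #{e ∈ p.edges.toFinset | x ∈ e} ≤ 2 := by
  set H := p.toSubgraph.spanningCoe
  have hinc : (({e ∈ p.edges.toFinset | x ∈ e} : Finset _) : Set (Sym2 V)) =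
      H.incidenceSet x := by
    ext e; simp [H, incidenceSet]
  have hnbr : H.neighborSet x = p.toSubgraph.neighborSet x := by ext; simp [H]
  rw [← Set.ncard_coe_finset, hinc, Set.ncard_congr' (H.incidenceSetEquivNeighborSet x), hnbr]
  by_cases hx : x ∈ p.support
  · exact (hp.ncard_neighborSet_toSubgraph_eq_two hx).le
  · have : p.toSubgraph.neighborSet x = ∅ := Set.eq_empty_of_forall_notMem fun _ hy =>
      hx ((mem_verts_toSubgraph p).mp (p.toSubgraph.edge_vert hy))
    simp [this]

lemma IsHamiltonianCycle.card_sub_le_card_filter_edges [Fintype V] [DecidableEq V] {u : V}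
    {p : G.Walk u u} (hp : p.IsHamiltonianCycle) (A : Finset V) :
    Fintype.card V - 2 * #A ≤ #{e ∈ p.edges.toFinset | ∀ x ∈ e, x ∉ A} := by
  set E := p.edges.toFinset
  have hcard : #E = Fintype.card V := by
    rw [List.toFinset_card_of_nodup hp.isCycle.edges_nodup, length_edges, hp.length_eq]
  calc Fintype.card V - 2 * #A ≤ #E - #(A.biUnion fun x => {e ∈ E | x ∈ e}) := by
        rw [hcard, mul_comm]
        gcongr
        exact card_biUnion_le_card_mul _ _ _ fun x _ => hp.isCycle.card_filter_mem_edges_le_two x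
    _ ≤ #(E \ A.biUnion fun x => {e ∈ E | x ∈ e}) := le_card_sdiff _ _
    _ ≤ #{e ∈ E | ∀ x ∈ e, x ∉ A} := card_le_card fun e he => by
        simp only [mem_sdiff, mem_biUnion, mem_filter, not_exists, not_and] at he
        simp only [mem_filter]
        exact ⟨he.1, fun x hxe hxA => he.2 x hxA he.1 hxe⟩

end SimpleGraph.Walk

namespace SimpleGraph

section HamiltonCycles

variable {V W : Type*} [DecidableEq V]

def HasEdgeDisjointHamiltonCycles (G : SimpleGraph V) (h : ℕ) : Prop :=
  ∃ (v : Fin h → V) (w : ∀ i, G.Walk (v i) (v i)), (∀ i, (w i).IsHamiltonianCycle) ∧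
    ∀ i j, i ≠ j → ∀ e ∈ (w i).edges, e ∉ (w j).edges

namespace HasEdgeDisjointHamiltonCycles

variable {G : SimpleGraph V} {G' : SimpleGraph W} {h : ℕ}

lemma map [DecidableEq W] (f : G ≃g G') (hG : G.HasEdgeDisjointHamiltonCycles h) :
    G'.HasEdgeDisjointHamiltonCycles h := by
  obtain ⟨v, w, hham, hdisj⟩ := hG
  refine ⟨fun i => f (v i), fun i => (w i).map f.toHom,
    fun i => (hham i).map (f := f.toHom) f.bijective, fun i j hij e hi hj => ?_⟩
  simp only [Walk.edges_map, List.mem_map] at hi hj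
  obtain ⟨e, he, rfl⟩ := hi
  obtain ⟨e', he', hee'⟩ := hj
  exact hdisj i j hij e he (Sym2.map.injective f.injective hee' ▸ he')

lemma mul_le_card_filter_edgeFinset [Fintype V] [Fintype G.edgeSet]
    (hG : G.HasEdgeDisjointHamiltonCycles h) (A : Finset V) :
    h * (Fintype.card V - 2 * #A) ≤ #{e ∈ G.edgeFinset | ∀ x ∈ e, x ∉ A} := by
  obtain ⟨v, w, hham, hdisj⟩ := hG
  set F : Fin h → Finset (Sym2 V) := fun i => {e ∈ (w i).edges.toFinset | ∀ x ∈ e, x ∉ A}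
  have hF : ((univ : Finset (Fin h)) : Set (Fin h)).PairwiseDisjoint F := fun i _ j _ hij =>
    Finset.disjoint_left.mpr fun e hi hj => hdisj i j hij e
      (List.mem_toFinset.mp (mem_filter.mp hi).1) (List.mem_toFinset.mp (mem_filter.mp hj).1)
  calc h * (Fintype.card V - 2 * #A) = ∑ _i : Fin h, (Fintype.card V - 2 * #A) := by simp
    _ ≤ ∑ i, #(F i) := sum_le_sum fun i _ => (hham i).card_sub_le_card_filter_edges A
    _ = #(univ.biUnion F) := (card_biUnion hF).symm
    _ ≤ #{e ∈ G.edgeFinset | ∀ x ∈ e, x ∉ A} :=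
        card_le_card <| biUnion_subset.mpr fun i _ => filter_subset_filter _ fun e he =>
          mem_edgeFinset.mpr ((w i).edges_subset_edgeSet (List.mem_toFinset.mp he))

end HasEdgeDisjointHamiltonCycles

end HamiltonCycles

lemma ncard_neighborSet_map_equiv {V W : Type*} (G : SimpleGraph V) (e : V ≃ W) (v : V) :
    ((G.map e.toEmbedding).neighborSet (e v)).ncard = (G.neighborSet v).ncard :=
  (congrArg Set.ncard (G.neighborSet_map e.toEmbedding v)).trans
    (Set.ncard_image_of_injective _ e.injective)

lemma two_mul_card_edgeFinset_of_ncard_neighborSet {V : Type*} [Fintype V] {G : SimpleGraph V}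
    [DecidableRel G.Adj] {d : ℕ} (hd : ∀ v, (G.neighborSet v).ncard = d) :
    2 * #G.edgeFinset = Fintype.card V * d := by
  rw [← sum_degrees_eq_twice_card_edges, ← card_univ]
  refine sum_const_nat fun v _ => ?_
  rw [← hd v, Set.ncard_eq_toFinset_card', ← neighborFinset_def, card_neighborFinset_eq_degree]

def emptyJoin (U : Type*) {W : Type*} (H : SimpleGraph W) : SimpleGraph (U ⊕ W) where
  Adj
    | .inl _, .inl _ => False
    | .inr p, .inr q => H.Adj p q
    | _, _ => True
  symm := ⟨by rintro (_ | _) (_ | _) h <;> first | trivial | exact H.adj_symm h⟩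
  loopless := ⟨by rintro (_ | _) h; exacts [h, H.loopless.irrefl _ h]⟩

section emptyJoin

variable {U W : Type*} (H : SimpleGraph W)

@[simp] lemma emptyJoin_adj_inl_inl (i j : U) : ¬(emptyJoin U H).Adj (.inl i) (.inl j) := id
@[simp] lemma emptyJoin_adj_inl_inr (i : U) (q : W) : (emptyJoin U H).Adj (.inl i) (.inr q) :=
  trivial
@[simp] lemma emptyJoin_adj_inr_inl (p : W) (j : U) : (emptyJoin U H).Adj (.inr p) (.inl j) :=
  trivial
@[simp] lemma emptyJoin_adj_inr_inr (p q : W) :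
    (emptyJoin U H).Adj (.inr p) (.inr q) ↔ H.Adj p q := Iff.rfl

lemma emptyJoin_neighborSet_inl (i : U) :
    (emptyJoin U H).neighborSet (.inl i) = Set.range Sum.inr := by
  ext (_ | _) <;> simp

lemma emptyJoin_neighborSet_inr (p : W) :
    (emptyJoin U H).neighborSet (.inr p) = Set.range Sum.inl ∪ Sum.inr '' H.neighborSet p := by
  ext (_ | _) <;> simp

lemma ncard_neighborSet_emptyJoin_inl (i : U) :
    ((emptyJoin U H).neighborSet (.inl i)).ncard = Nat.card W := by
  rw [emptyJoin_neighborSet_inl, ← Set.image_univ,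
    Set.ncard_image_of_injective _ Sum.inr_injective, Set.ncard_univ]

lemma ncard_neighborSet_emptyJoin_inr [Finite U] [Finite W] (p : W) :
    ((emptyJoin U H).neighborSet (.inr p)).ncard = Nat.card U + (H.neighborSet p).ncard := by
  rw [emptyJoin_neighborSet_inr, Set.ncard_union_eq, ← Set.image_univ,
    Set.ncard_image_of_injective _ Sum.inl_injective, Set.ncard_univ,
    Set.ncard_image_of_injective _ Sum.inr_injective]
  rw [Set.disjoint_left]
  rintro _ ⟨i, rfl⟩ ⟨q, _, hq⟩
  exact Sum.inr_ne_inl hq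

lemma card_filter_edgeFinset_emptyJoin [Fintype U] [Fintype W] [DecidableEq U] [DecidableEq W]
    [Fintype H.edgeSet] [Fintype (emptyJoin U H).edgeSet] :
    #{e ∈ (emptyJoin U H).edgeFinset | ∀ x ∈ e, x ∉ univ.map .inl} = #H.edgeFinset := by
  symm
  rw [← card_map (Function.Embedding.inr : W ↪ U ⊕ W).sym2Map]
  congr 1
  ext e
  induction e using Sym2.inductionOn with
  | _ x y =>
    cases x <;> cases y <;> simp [Sym2.exists]
    exact ⟨by rintro ⟨_, _, h, ⟨rfl, rfl⟩ | ⟨rfl, rfl⟩⟩; exacts [h, h.symm],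
      fun h => ⟨_, _, h, .inl ⟨rfl, rfl⟩⟩⟩

lemma HasEdgeDisjointHamiltonCycles.mul_le_card_edgeFinset_of_emptyJoin [Fintype U] [Fintype W]
    [DecidableEq U] [DecidableEq W] [Fintype H.edgeSet] [Fintype (emptyJoin U H).edgeSet] {h : ℕ}
    (hH : (emptyJoin U H).HasEdgeDisjointHamiltonCycles h) :
    h * (Fintype.card W - Fintype.card U) ≤ #H.edgeFinset := by
  have := hH.mul_le_card_filter_edgeFinset (univ.map .inl)
  rwa [card_filter_edgeFinset_emptyJoin, card_map, card_univ, Fintype.card_sum,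
    show Fintype.card U + Fintype.card W - 2 * Fintype.card U = Fintype.card W - Fintype.card U
      by omega] at this

end emptyJoin

lemma circulantGraph_neighborSet {G : Type*} [AddGroup G] (s : Set G) (u : G) :
    (circulantGraph s).neighborSet u = (· + u) '' ((s ∪ -s) \ {0}) := by
  ext v
  simp only [mem_neighborSet, circulantGraph_adj, Set.mem_image, Set.mem_sdiff, Set.mem_union,
    Set.mem_neg, Set.mem_singleton_iff]
  constructor
  · rintro ⟨huv, h⟩
    refine ⟨v - u, ⟨?_, sub_ne_zero.mpr (Ne.symm huv)⟩, sub_add_cancel v u⟩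
    rwa [neg_sub, or_comm]
  · rintro ⟨g, ⟨h, hg⟩, rfl⟩
    refine ⟨fun h' => hg (by simpa using h'.symm), ?_⟩
    simpa [sub_add_eq_sub_sub, or_comm] using h

lemma ncard_neighborSet_circulantGraph {G : Type*} [AddGroup G] (s : Set G) (u : G) :
    ((circulantGraph s).neighborSet u).ncard = ((s ∪ -s) \ {0}).ncard := by
  rw [circulantGraph_neighborSet, Set.ncard_image_of_injective _ (add_left_injective u)]

def cycleGraphPow (m c : ℕ) : SimpleGraph (ZMod m) :=
  circulantGraph (Nat.cast '' Set.Icc 1 c)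

lemma ncard_neighborSet_cycleGraphPow {m c : ℕ} (hcm : 2 * c < m) (u : ZMod m) :
    ((cycleGraphPow m c).neighborSet u).ncard = 2 * c := by
  rw [cycleGraphPow, ncard_neighborSet_circulantGraph]
  set J : Set (ZMod m) := Nat.cast '' Set.Icc 1 c
  have hJfin : J.Finite := (Set.finite_Icc 1 c).image _
  have hneg : ∀ j k : ℕ, j + k ≤ 2 * c → (j : ZMod m) = -k → j + k = 0 := by
    intro j k hjk h
    rw [eq_neg_iff_add_eq_zero, ← Nat.cast_add, ZMod.natCast_eq_zero_iff] at h
    exact Nat.eq_zero_of_dvd_of_lt h (by omega)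
  have h0 : (0 : ZMod m) ∉ J ∪ -J := by
    rintro (⟨j, ⟨hj, hjc⟩, h⟩ | ⟨j, ⟨hj, hjc⟩, h⟩)
    · have := hneg j 0 (by omega) (by simpa using h)
      omega
    · have := hneg j 0 (by omega) (by simpa using h)
      omega
  have hdisj : Disjoint J (-J) := by
    rw [Set.disjoint_left]
    rintro _ ⟨j, ⟨hj, hjc⟩, rfl⟩ ⟨k, ⟨hk, hkc⟩, h⟩
    have := hneg j k (by omega) (neg_eq_iff_eq_neg.mp h.symm)
    omega
  have hJ : J.ncard = c := by
    rw [Set.InjOn.ncard_image, ← Finset.coe_Icc, Set.ncard_coe_finset, Nat.card_Icc,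
      Nat.add_sub_cancel]
    rintro j ⟨-, hj⟩ k ⟨-, hk⟩ h
    rwa [ZMod.natCast_eq_natCast_iff', Nat.mod_eq_of_lt (by omega),
      Nat.mod_eq_of_lt (by omega)] at h
  rw [Set.sdiff_singleton_eq_self h0, Set.ncard_union_eq hdisj hJfin hJfin.neg, Set.ncard_neg,
    hJ, two_mul]

lemma card_edgeFinset_cycleGraphPow {m c : ℕ} [NeZero m] (hcm : 2 * c < m)
    [DecidableRel (cycleGraphPow m c).Adj] : #(cycleGraphPow m c).edgeFinset = m * c := by
  have := two_mul_card_edgeFinset_of_ncard_neighborSet (ncard_neighborSet_cycleGraphPow hcm)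
  rw [ZMod.card] at this
  linarith

end SimpleGraph

lemma sqrt_add_sq_add_le_of_le_four (r d : ℕ) (hd : d ≤ 4) :
    (r.sqrt + d) ^ 2 + r ≤ 4 * (r.sqrt + d) + 2 * (r.sqrt + d) * r.sqrt := by
  have hr : r < (r.sqrt + 1) ^ 2 := by rw [sq]; exact Nat.lt_succ_sqrt r
  have hdd : d * d ≤ 4 * d := Nat.mul_le_mul_right d hd
  nlinarith

lemma exists_join_parameters {n δ : ℕ} (h1 : n < 2 * δ) (h2 : δ < n) :
    ∃ a m c : ℕ, a + m = n ∧ a + 2 * c = δ ∧ δ ≤ m ∧ 2 * c < m ∧ a < m ∧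
      4 * (m * c) ≤ (m - a) * (δ + 2 + (n * (2 * δ - n)).sqrt) := by
  set x := 2 * δ - n
  set t := (n * x).sqrt
  have hxt : x ≤ t := Nat.le_sqrt.mpr (Nat.mul_le_mul_right x (by omega))
  have htn : t + 2 ≤ n := by
    have : n * x < (n - 1) * (n - 1) := by
      obtain ⟨k, rfl⟩ : ∃ k, n = k + 1 := ⟨n - 1, by omega⟩
      have : x + 1 ≤ k := by omega
      simp only [Nat.add_sub_cancel]
      nlinarith
    have := Nat.sqrt_lt.mpr this
    omega
  -- `u = m - a` is `⌊√(n x)⌋` plus at most 3, so that `4 ∣ x + u` and `c = (x + u) / 4`.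
  set u := t + (4 - (x + t) % 4) % 4
  have hxu : (x + u) % 4 = 0 := by omega
  refine ⟨(n - u) / 2, (n + u) / 2, (x + u) / 4,
    by omega, by omega, by omega, by omega, by omega, ?_⟩
  have hmc : 8 * ((n + u) / 2 * ((x + u) / 4)) = (n + u) * (x + u) := by
    rw [show 8 * ((n + u) / 2 * ((x + u) / 4)) = (2 * ((n + u) / 2)) * (4 * ((x + u) / 4)) by ring,
      Nat.mul_div_cancel' (by omega), Nat.mul_div_cancel' (Nat.dvd_of_mod_eq_zero hxu)]
  have hu2 : (n + u) / 2 - (n - u) / 2 = u := by omega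
  rw [hu2]
  have key : u ^ 2 + n * x ≤ 4 * u + 2 * u * t :=
    sqrt_add_sq_add_le_of_le_four (n * x) ((4 - (x + t) % 4) % 4) (by omega)
  have hnx : n + x = 2 * δ := by omega
  have : (n + u) * (x + u) ≤ 2 * (u * (δ + 2 + t)) := calc
    (n + u) * (x + u) = (u ^ 2 + n * x) + u * (n + x) := by ring
    _ ≤ 4 * u + 2 * u * t + u * (2 * δ) := by rw [hnx]; gcongr
    _ = 2 * (u * (δ + 2 + t)) := by ring
  linarith

lemma natCast_le_add_sqrt_div_four {h k r : ℕ} (hk : 4 * h ≤ k + r.sqrt) :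
    (h : ℝ) ≤ (k + √(r : ℝ)) / 4 := by
  have hk' : (4 * h : ℝ) ≤ k + r.sqrt := by exact_mod_cast hk
  have := Real.nat_sqrt_le_real_sqrt (a := r)
  linarith

theorem stmt_3_general (n δ : ℕ) (h1 : n < 2*δ) (h2 : δ < n) :
    ∃ G : SimpleGraph (Fin n),
      (∀ v, δ ≤ (G.neighborSet v).ncard) ∧
      (∃ v, (G.neighborSet v).ncard = δ) ∧
      ∀ (h : ℕ) (v : Fin h → Fin n) (w : ∀ i, G.Walk (v i) (v i)),
        (∀ i, (w i).IsHamiltonianCycle) →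
        (∀ i j, i ≠ j → ∀ e ∈ (w i).edges, e ∉ (w j).edges) →
        (h : ℝ) ≤ ((δ : ℝ) + 2 + Real.sqrt ((n * (2*δ - n) : ℕ) : ℝ)) / 4 := by
  classical
  obtain ⟨a, m, c, hn, hδ, hδm, hcm, ham, hbound⟩ := exists_join_parameters h1 h2
  have : NeZero m := ⟨by omega⟩
  set H := emptyJoin (Fin a) (cycleGraphPow m c)
  let f : (Fin a ⊕ ZMod m) ≃ Fin n := Fintype.equivOfCardEq (by simp [ZMod.card]; omega)
  have hdeg : ∀ p, ((H.map f.toEmbedding).neighborSet (f (.inr p))).ncard = δ := fun p => by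
    rw [ncard_neighborSet_map_equiv, ncard_neighborSet_emptyJoin_inr,
      ncard_neighborSet_cycleGraphPow hcm, Nat.card_fin, hδ]
  refine ⟨H.map f.toEmbedding, fun v => ?_, ⟨f (.inr 0), hdeg 0⟩,
    fun h v w hham hdisj => ?_⟩
  · obtain ⟨i | p, rfl⟩ := f.surjective v
    · rwa [ncard_neighborSet_map_equiv, ncard_neighborSet_emptyJoin_inl, Nat.card_zmod]
    · exact (hdeg p).ge
  · have hcount := (HasEdgeDisjointHamiltonCycles.map (Iso.map f H).symm
      ⟨v, w, hham, hdisj⟩).mul_le_card_edgeFinset_of_emptyJoin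
    rw [card_edgeFinset_cycleGraphPow hcm, Fintype.card_fin, ZMod.card] at hcount
    have h4 : 4 * h ≤ δ + 2 + (n * (2 * δ - n)).sqrt := by
      refine Nat.le_of_mul_le_mul_left ?_ (by omega : 0 < m - a)
      calc (m - a) * (4 * h) = 4 * (h * (m - a)) := by ring
        _ ≤ 4 * (m * c) := by omega
        _ ≤ _ := hbound
    exact_mod_cast natCast_le_add_sqrt_div_four (k := δ + 2) h4

/-- For all positive integers `δ`, `n` with `n/2 < δ < n`, there is a graph `G` on `n`
vertices with minimum degree `δ` containing at most `(δ + 2 + √(n(2δ - n)))/4`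
pairwise edge-disjoint Hamilton cycles. -/
theorem stmt_3 (n δ : ℕ) (hδpos : 0 < δ) (h1 : n < 2*δ) (h2 : δ < n) :
    ∃ G : SimpleGraph (Fin n),
      (∀ v, δ ≤ (G.neighborSet v).ncard) ∧
      (∃ v, (G.neighborSet v).ncard = δ) ∧
      ∀ (h : ℕ) (v : Fin h → Fin n) (w : ∀ i, G.Walk (v i) (v i)),
        (∀ i, (w i).IsHamiltonianCycle) →
        (∀ i j, i ≠ j → ∀ e ∈ (w i).edges, e ∉ (w j).edges) →
        (h : ℝ) ≤ ((δ : ℝ) + 2 + Real.sqrt ((n * (2*δ - n) : ℕ) : ℝ)) / 4 :=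
  stmt_3_general n δ h1 h2
end

section
/- Let δ, r, ℓ, n be positive reals with n = |T| + |S| for nonnegative reals |T| ≥ (r+1)/ℓ and |S| ≥ (δ−r+1)/ℓ, and suppose (δ − r)r ≥ ((ℓn − δ)/2)². Then (δ − r + 1)|T| + (r + 1)|S| − ℓ|S||T| ≥ n. -/
/-!
After multiplying by `ℓ` and substituting `n = t + s`, the slack of the inequality is exactly the
hypothesis gap `(δ - r) r - ((ℓ n - δ) / 2)²` plus the square `((ℓ (t - s) + δ - 2 r) / 2)²`:
this is the AM-GM bound on `ℓ t s` for fixed `t + s`, with its error term made explicit.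
-/

lemma mul_slack_eq_gap_add_sq (δ r ℓ t s : ℝ) :
    ℓ * ((δ - r + 1) * t + (r + 1) * s - ℓ * s * t - (t + s)) =
      ((δ - r) * r - ((ℓ * (t + s) - δ) / 2) ^ 2) + ((ℓ * (t - s) + δ - 2 * r) / 2) ^ 2 := by
  ring

theorem stmt_12_general (δ r ℓ n t s : ℝ)
    (hℓ : 0 < ℓ)
    (hnts : n = t + s)
    (h : ((ℓ*n - δ)/2)^2 ≤ (δ - r) * r) :
    n ≤ (δ - r + 1) * t + (r + 1) * s - ℓ * s * t := by
  subst hnts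
  refine sub_nonneg.1 ((mul_nonneg_iff_of_pos_left hℓ).1 ?_)
  rw [mul_slack_eq_gap_add_sq]
  have := sq_nonneg ((ℓ * (t - s) + δ - 2 * r) / 2)
  linarith

/-- If `t ≥ (r+1)/ℓ`, `s ≥ (δ−r+1)/ℓ`, `n = t + s` and `(δ−r)r ≥ ((ℓn−δ)/2)²`,
then `(δ − r + 1)t + (r + 1)s − ℓst ≥ n`. -/
theorem stmt_12 (δ r ℓ n t s : ℝ)
    (hδ : 0 < δ) (hr : 0 < r) (hℓ : 0 < ℓ) (hn : 0 < n)
    (ht0 : 0 ≤ t) (hs0 : 0 ≤ s)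
    (ht : (r + 1)/ℓ ≤ t) (hs : (δ - r + 1)/ℓ ≤ s) (hnts : n = t + s)
    (h : ((ℓ*n - δ)/2)^2 ≤ (δ - r) * r) :
    n ≤ (δ - r + 1) * t + (r + 1) * s - ℓ * s * t :=
  stmt_12_general δ r ℓ n t s hℓ hnts h
end

section
/- Every cycle v₁…v_t (t ≥ 3) in a multigraph R gives rise, after splitting each vertex vᵢ into two copies aᵢ, bᵢ, to two edge-disjoint cycles in the split multigraph R*, each of length 2t (in particular of even length), whose edges project onto the edges of the original cycle, each original edge being covered exactly twice by each new cycle's projection. -/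
section Helpers
set_option linter.unusedSectionVars false
set_option linter.unusedVariables false
variable {V : Type} [DecidableEq V] {t : ℕ}

lemma castt_inj [NeZero t] {a b : ℕ} (ha : a < t) (hb : b < t)
    (h : (a : ZMod t) = b) : a = b := by
  have := congrArg ZMod.val h
  rwa [ZMod.val_cast_of_lt ha, ZMod.val_cast_of_lt hb] at this

lemma two_ne_zero_zmod [NeZero t] (ht : 3 ≤ t) : (2 : ZMod t) ≠ 0 := by
  intro h
  have h2 : ((2 : ℕ) : ZMod t) = ((0 : ℕ) : ZMod t) := by push_cast; exact h
  have := castt_inj (by omega) (by omega) h2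
  omega

lemma sym2_edge_iff [NeZero t] (ht : 3 ≤ t) {v : ZMod t → V}
    (hinj : Function.Injective v) (x j : ZMod t) :
    s(v x, v (x+1)) = s(v j, v (j+1)) ↔ x = j := by
  constructor
  · intro h
    rw [Sym2.eq_iff] at h
    rcases h with ⟨h1, h2⟩ | ⟨h1, h2⟩
    · exact hinj h1
    · exfalso
      have hx1 := hinj h1
      have hx2 := hinj h2
      apply two_ne_zero_zmod (t := t) ht
      have : x + 1 + 1 = x := by rw [hx1] at hx2 ⊢; linear_combination hx2
      linear_combination this
  · rintro rfl; rfl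

lemma val_next [NeZero (2*t)] (i : ZMod (2*t)) :
    (i + 1).val = if i.val + 1 = 2*t then 0 else i.val + 1 := by
  have h2t : 1 < 2*t := by have := Nat.pos_of_ne_zero (NeZero.ne (2*t)); omega
  have h1 : (1 : ZMod (2*t)).val = 1 := by
    rw [ZMod.val_one_eq_one_mod]; exact Nat.mod_eq_of_lt h2t
  have hi : i.val < 2*t := ZMod.val_lt i
  rw [ZMod.val_add, h1]
  split
  · next h => rw [h, Nat.mod_self]
  · next h => exact Nat.mod_eq_of_lt (by omega)

lemma cast_succ_eq (t : ℕ) [NeZero t] {a b : ℕ}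
    (h : b = a + 1 ∨ (a = t - 1 ∧ b = 0)) : ((b : ℕ) : ZMod t) = (a : ZMod t) + 1 := by
  have h3 : 0 < t := Nat.pos_of_ne_zero (NeZero.ne t)
  rcases h with rfl | ⟨rfl, rfl⟩
  · push_cast; ring
  · have h4 : ((t - 1 : ℕ) : ZMod t) + 1 = ((t - 1 + 1 : ℕ) : ZMod t) := by push_cast; ring
    rw [h4]
    have ht' : t - 1 + 1 = t := by omega
    rw [ht', ZMod.natCast_self]; exact Nat.cast_zero

/-- "Step description": a walk given by vertex-index function `d` traverses,
at step `m`, the edge `e m` (forward or backward). -/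
def StepOK (t : ℕ) (d e : ℕ → ℕ) : Prop :=
  ∀ m, m < 2*t → e m < t ∧ d m < t ∧
    ((d m = e m ∧ ((d (if m+1 = 2*t then 0 else m+1) : ZMod t) = (e m : ZMod t) + 1))
   ∨ (d (if m+1 = 2*t then 0 else m+1) = e m ∧ ((d m : ZMod t) = (e m : ZMod t) + 1)))

lemma step_edge [NeZero t] [NeZero (2*t)] {v : ZMod t → V}
    {d e : ℕ → ℕ} (hstep : StepOK t d e) (i : ZMod (2*t)) :
    s(v ((d i.val : ℕ) : ZMod t), v ((d (i+1).val : ℕ) : ZMod t))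
      = s(v ((e i.val : ℕ) : ZMod t), v (((e i.val : ℕ) : ZMod t) + 1)) := by
  obtain ⟨he, hd, hcase⟩ := hstep i.val (ZMod.val_lt i)
  rw [val_next i]
  rcases hcase with ⟨h1, h2⟩ | ⟨h1, h2⟩
  · rw [h1, h2]
  · rw [h1, h2, Sym2.eq_swap]

lemma step_mult [NeZero t] [NeZero (2*t)] {v : ZMod t → V}
    (mult : V → V → ℕ) (hsymm : ∀ u w, mult u w = mult w u)
    (hcyc : ∀ i, 0 < mult (v i) (v (i+1)))
    {d e : ℕ → ℕ} (hstep : StepOK t d e) (i : ZMod (2*t)) :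
    0 < mult (v ((d i.val : ℕ) : ZMod t)) (v ((d (i+1).val : ℕ) : ZMod t)) := by
  obtain ⟨he, hd, hcase⟩ := hstep i.val (ZMod.val_lt i)
  rw [val_next i]
  rcases hcase with ⟨h1, h2⟩ | ⟨h1, h2⟩
  · rw [h1, h2]; exact hcyc _
  · rw [h1, h2, hsymm]; exact hcyc _

lemma step_count [NeZero t] [NeZero (2*t)] (ht : 3 ≤ t) {v : ZMod t → V}
    (hinj : Function.Injective v)
    {d e : ℕ → ℕ} (hstep : StepOK t d e)
    (m₁ m₂ : ℕ → ℕ)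
    (hfib : ∀ jv, jv < t → ∀ m, m < 2*t → (e m = jv ↔ m = m₁ jv ∨ m = m₂ jv))
    (hm₁ : ∀ jv, jv < t → m₁ jv < 2*t) (hm₂ : ∀ jv, jv < t → m₂ jv < 2*t)
    (hne : ∀ jv, jv < t → m₁ jv ≠ m₂ jv) (j : ZMod t) :
    (Finset.univ.filter
      (fun i : ZMod (2*t) =>
        s(v ((d i.val : ℕ) : ZMod t), v ((d (i+1).val : ℕ) : ZMod t))
          = s(v j, v (j+1)))).card = 2 := by
  have hjv : j.val < t := ZMod.val_lt j
  have key : (Finset.univ.filter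
      (fun i : ZMod (2*t) =>
        s(v ((d i.val : ℕ) : ZMod t), v ((d (i+1).val : ℕ) : ZMod t))
          = s(v j, v (j+1))))
      = {((m₁ j.val : ℕ) : ZMod (2*t)), ((m₂ j.val : ℕ) : ZMod (2*t))} := by
    ext i
    simp only [Finset.mem_filter, Finset.mem_univ, true_and, Finset.mem_insert,
      Finset.mem_singleton]
    rw [step_edge hstep i, sym2_edge_iff ht hinj]
    constructor
    · intro h
      have hev : e i.val = j.val := by
        apply castt_inj (hstep i.val (ZMod.val_lt i)).1 hjv
        rw [h, ZMod.natCast_val, ZMod.cast_id]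
      have := (hfib j.val hjv i.val (ZMod.val_lt i)).mp hev
      rcases this with h' | h'
      · left; rw [← h']; exact (ZMod.natCast_rightInverse i).symm
      · right; rw [← h']; exact (ZMod.natCast_rightInverse i).symm
    · rintro (rfl | rfl)
      · have h1 : ((m₁ j.val : ℕ) : ZMod (2*t)).val = m₁ j.val :=
          ZMod.val_cast_of_lt (hm₁ j.val hjv)
        rw [h1]
        have : e (m₁ j.val) = j.val :=
          (hfib j.val hjv _ (hm₁ j.val hjv)).mpr (Or.inl rfl)
        rw [this, ZMod.natCast_val, ZMod.cast_id]
      · have h1 : ((m₂ j.val : ℕ) : ZMod (2*t)).val = m₂ j.val :=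
          ZMod.val_cast_of_lt (hm₂ j.val hjv)
        rw [h1]
        have : e (m₂ j.val) = j.val :=
          (hfib j.val hjv _ (hm₂ j.val hjv)).mpr (Or.inr rfl)
        rw [this, ZMod.natCast_val, ZMod.cast_id]
  rw [key, Finset.card_insert_of_notMem, Finset.card_singleton]
  simp only [Finset.mem_singleton]
  intro h
  apply hne j.val hjv
  exact castt_inj (t := 2*t) (hm₁ j.val hjv) (hm₂ j.val hjv) h

/-! ### The even case -/

def dEven (t m : ℕ) : ℕ := if m < t then m else m - t
def b1Even (t m : ℕ) : Bool := decide (t ≤ m)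
def b2Even (t m : ℕ) : Bool := if m < t then decide (m % 2 = 1) else decide (m % 2 = 0)

lemma stepEven (ht : 3 ≤ t) [NeZero t] : StepOK t (dEven t) (dEven t) := by
  intro m hm
  refine ⟨?_, ?_, Or.inl ⟨rfl, ?_⟩⟩
  · simp only [dEven]; split <;> omega
  · simp only [dEven]; split <;> omega
  · apply cast_succ_eq
    simp only [dEven]
    split_ifs <;> omega

lemma fibEven : ∀ jv, jv < t → ∀ m, m < 2*t →
    (dEven t m = jv ↔ m = jv ∨ m = jv + t) := by
  intro jv hjv m hm
  simp only [dEven]; split <;> omega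

lemma even_case [NeZero t] [NeZero (2*t)] (ht : 3 ≤ t) (hpar : t % 2 = 0)
    (mult : V → V → ℕ) (hsymm : ∀ u w, mult u w = mult w u)
    (v : ZMod t → V) (hinj : Function.Injective v)
    (hcyc : ∀ i, 0 < mult (v i) (v (i+1))) :
    ∃ c₁ c₂ : ZMod (2*t) → V × Bool,
      Function.Injective c₁ ∧ Function.Injective c₂ ∧
      (∀ i, 0 < mult (c₁ i).1 (c₁ (i+1)).1) ∧
      (∀ i, 0 < mult (c₂ i).1 (c₂ (i+1)).1) ∧
      (∀ i j, s(c₁ i, c₁ (i+1)) ≠ s(c₂ j, c₂ (j+1))) ∧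
      (∀ i, ∃ j, s((c₁ i).1, (c₁ (i+1)).1) = s(v j, v (j+1))) ∧
      (∀ i, ∃ j, s((c₂ i).1, (c₂ (i+1)).1) = s(v j, v (j+1))) ∧
      (∀ j : ZMod t, (Finset.univ.filter
          (fun i : ZMod (2*t) =>
            s((c₁ i).1, (c₁ (i+1)).1) = s(v j, v (j+1)))).card = 2) ∧
      (∀ j : ZMod t, (Finset.univ.filter
          (fun i : ZMod (2*t) =>
            s((c₂ i).1, (c₂ (i+1)).1) = s(v j, v (j+1)))).card = 2) := by
  have hdlt : ∀ k, k < 2*t → dEven t k < t := fun k hk => by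
    simp only [dEven]; split <;> omega
  have hnextlt : ∀ k, k < 2*t → (if k+1 = 2*t then 0 else k+1) < 2*t := fun k hk => by
    split <;> omega
  refine ⟨fun i => (v ((dEven t i.val : ℕ) : ZMod t), b1Even t i.val),
          fun i => (v ((dEven t i.val : ℕ) : ZMod t), b2Even t i.val),
          ?_, ?_, ?_, ?_, ?_, ?_, ?_, ?_, ?_⟩
  · -- injectivity of c₁
    intro i i' h
    rw [Prod.ext_iff] at h
    obtain ⟨h1, h2⟩ := h
    have hm := ZMod.val_lt i; have hm' := ZMod.val_lt i'
    have hd := castt_inj (hdlt _ hm) (hdlt _ hm') (hinj h1)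
    apply ZMod.val_injective
    simp only [dEven, b1Even, decide_eq_decide] at hd h2
    split_ifs at hd <;> omega
  · -- injectivity of c₂
    intro i i' h
    rw [Prod.ext_iff] at h
    obtain ⟨h1, h2⟩ := h
    have hm := ZMod.val_lt i; have hm' := ZMod.val_lt i'
    have hd := castt_inj (hdlt _ hm) (hdlt _ hm') (hinj h1)
    apply ZMod.val_injective
    simp only [dEven, b2Even] at hd h2
    split_ifs at hd h2 <;> simp only [decide_eq_decide] at h2 <;> omega
  · exact fun i => step_mult mult hsymm hcyc (stepEven ht) i
  · exact fun i => step_mult mult hsymm hcyc (stepEven ht) i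
  · -- edge-disjointness
    intro i j h
    have hm := ZMod.val_lt i; have hn := ZMod.val_lt j
    dsimp only at h
    rw [val_next i, val_next j, Sym2.eq_iff] at h
    rcases h with ⟨h1, h2⟩ | ⟨h1, h2⟩ <;> rw [Prod.ext_iff] at h1 h2
    · obtain ⟨hv1, hb1⟩ := h1; obtain ⟨hv2, hb2⟩ := h2
      have e1 := castt_inj (hdlt _ hm) (hdlt _ hn) (hinj hv1)
      have e2 := castt_inj (hdlt _ (hnextlt _ hm)) (hdlt _ (hnextlt _ hn)) (hinj hv2)
      simp only [dEven, b1Even, b2Even] at e1 e2 hb1 hb2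
      split_ifs at e1 e2 hb1 hb2 <;> simp only [decide_eq_decide, iff_false, iff_true] at hb1 hb2 <;> omega
    · obtain ⟨hv1, hb1⟩ := h1; obtain ⟨hv2, hb2⟩ := h2
      have e1 := castt_inj (hdlt _ hm) (hdlt _ (hnextlt _ hn)) (hinj hv1)
      have e2 := castt_inj (hdlt _ (hnextlt _ hm)) (hdlt _ hn) (hinj hv2)
      simp only [dEven] at e1 e2
      split_ifs at e1 e2 <;> omega
  · exact fun i => ⟨((dEven t i.val : ℕ) : ZMod t), step_edge (stepEven ht) i⟩
  · exact fun i => ⟨((dEven t i.val : ℕ) : ZMod t), step_edge (stepEven ht) i⟩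
  · exact fun j => step_count ht hinj (stepEven ht) (fun jv => jv) (fun jv => jv + t)
      fibEven (fun jv hjv => show jv < 2*t by omega) (fun jv hjv => show jv + t < 2*t by omega)
      (fun jv hjv => show jv ≠ jv + t by omega) j
  · exact fun j => step_count ht hinj (stepEven ht) (fun jv => jv) (fun jv => jv + t)
      fibEven (fun jv hjv => show jv < 2*t by omega) (fun jv hjv => show jv + t < 2*t by omega)
      (fun jv hjv => show jv ≠ jv + t by omega) j

/-! ### The odd case -/

def dOdd1 (t m : ℕ) : ℕ := if m = 0 then 0 else if m < t then t - m else m - t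
def eOdd1 (t m : ℕ) : ℕ := if m < t then t - 1 - m else m - t
def dOdd2 (t m : ℕ) : ℕ := if m < t then m else if m = t then 0 else 2*t - m
def eOdd2 (t m : ℕ) : ℕ := if m < t then m else 2*t - 1 - m
def bOdd2 (t m : ℕ) : Bool :=
  if m < t then decide (m % 2 = 1) else if m = t then true else decide (m % 2 = 0)

lemma stepOdd1 (ht : 3 ≤ t) [NeZero t] : StepOK t (dOdd1 t) (eOdd1 t) := by
  intro m hm
  refine ⟨by simp only [eOdd1]; split <;> omega,
          by simp only [dOdd1]; split_ifs <;> omega, ?_⟩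
  by_cases hcase : m < t
  · refine Or.inr ⟨?_, ?_⟩
    · simp only [dOdd1, eOdd1]; split_ifs <;> first | contradiction | omega
    · apply cast_succ_eq; simp only [dOdd1, eOdd1]; split_ifs <;> first | contradiction | omega
  · refine Or.inl ⟨?_, ?_⟩
    · simp only [dOdd1, eOdd1]; split_ifs <;> first | contradiction | omega
    · apply cast_succ_eq; simp only [dOdd1, eOdd1]; split_ifs <;> first | contradiction | omega

lemma stepOdd2 (ht : 3 ≤ t) [NeZero t] : StepOK t (dOdd2 t) (eOdd2 t) := by
  intro m hm
  refine ⟨by simp only [eOdd2]; split <;> omega,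
          by simp only [dOdd2]; split_ifs <;> omega, ?_⟩
  by_cases hcase : m < t
  · refine Or.inl ⟨?_, ?_⟩
    · simp only [dOdd2, eOdd2]; split_ifs <;> first | contradiction | omega
    · apply cast_succ_eq; simp only [dOdd2, eOdd2]; split_ifs <;> first | contradiction | omega
  · refine Or.inr ⟨?_, ?_⟩
    · simp only [dOdd2, eOdd2]; split_ifs <;> first | contradiction | omega
    · apply cast_succ_eq; simp only [dOdd2, eOdd2]; split_ifs <;> first | contradiction | omega

lemma fibOdd1 (ht : 3 ≤ t) : ∀ jv, jv < t → ∀ m, m < 2*t →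
    (eOdd1 t m = jv ↔ m = t - 1 - jv ∨ m = jv + t) := by
  intro jv hjv m hm
  simp only [eOdd1]; split <;> omega

lemma fibOdd2 (ht : 3 ≤ t) : ∀ jv, jv < t → ∀ m, m < 2*t →
    (eOdd2 t m = jv ↔ m = jv ∨ m = 2*t - 1 - jv) := by
  intro jv hjv m hm
  simp only [eOdd2]; split <;> omega


set_option maxHeartbeats 1000000 in
lemma disjOddA (ht : 3 ≤ t) (hpar : t % 2 = 1) {m n m' n' : ℕ} (hm : m < 2*t) (hn : n < 2*t)
    (hm' : m' = m+1 ∧ m+1 < 2*t ∨ m' = 0 ∧ m+1 = 2*t)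
    (hn' : n' = n+1 ∧ n+1 < 2*t ∨ n' = 0 ∧ n+1 = 2*t)
    (e1 : dOdd1 t m = dOdd2 t n) (e2 : dOdd1 t m' = dOdd2 t n')
    (hb1 : (t ≤ m) ↔ (bOdd2 t n = true)) (hb2 : (t ≤ m') ↔ (bOdd2 t n' = true)) :
    False := by
  simp only [dOdd1, dOdd2, bOdd2] at e1 e2 hb1 hb2
  split_ifs at e1 e2 hb1 hb2 <;>
    first
      | contradiction
      | (simp only [decide_eq_true_eq, eq_self_iff_true, iff_true, true_iff] at hb1 hb2; omega)
      | omega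

set_option maxHeartbeats 1000000 in
lemma disjOddB (ht : 3 ≤ t) (hpar : t % 2 = 1) {m n m' n' : ℕ} (hm : m < 2*t) (hn : n < 2*t)
    (hm' : m' = m+1 ∧ m+1 < 2*t ∨ m' = 0 ∧ m+1 = 2*t)
    (hn' : n' = n+1 ∧ n+1 < 2*t ∨ n' = 0 ∧ n+1 = 2*t)
    (e1 : dOdd1 t m = dOdd2 t n') (e2 : dOdd1 t m' = dOdd2 t n)
    (hb1 : (t ≤ m) ↔ (bOdd2 t n' = true)) (hb2 : (t ≤ m') ↔ (bOdd2 t n = true)) :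
    False := by
  simp only [dOdd1, dOdd2, bOdd2] at e1 e2 hb1 hb2
  split_ifs at e1 e2 hb1 hb2 <;>
    first
      | contradiction
      | (simp only [decide_eq_true_eq, eq_self_iff_true, iff_true, true_iff] at hb1 hb2; omega)
      | omega

set_option maxHeartbeats 1000000 in
lemma odd_case [NeZero t] [NeZero (2*t)] (ht : 3 ≤ t) (hpar : t % 2 = 1)
    (mult : V → V → ℕ) (hsymm : ∀ u w, mult u w = mult w u)
    (v : ZMod t → V) (hinj : Function.Injective v)
    (hcyc : ∀ i, 0 < mult (v i) (v (i+1))) :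
    ∃ c₁ c₂ : ZMod (2*t) → V × Bool,
      Function.Injective c₁ ∧ Function.Injective c₂ ∧
      (∀ i, 0 < mult (c₁ i).1 (c₁ (i+1)).1) ∧
      (∀ i, 0 < mult (c₂ i).1 (c₂ (i+1)).1) ∧
      (∀ i j, s(c₁ i, c₁ (i+1)) ≠ s(c₂ j, c₂ (j+1))) ∧
      (∀ i, ∃ j, s((c₁ i).1, (c₁ (i+1)).1) = s(v j, v (j+1))) ∧
      (∀ i, ∃ j, s((c₂ i).1, (c₂ (i+1)).1) = s(v j, v (j+1))) ∧
      (∀ j : ZMod t, (Finset.univ.filter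
          (fun i : ZMod (2*t) =>
            s((c₁ i).1, (c₁ (i+1)).1) = s(v j, v (j+1)))).card = 2) ∧
      (∀ j : ZMod t, (Finset.univ.filter
          (fun i : ZMod (2*t) =>
            s((c₂ i).1, (c₂ (i+1)).1) = s(v j, v (j+1)))).card = 2) := by
  have hd1lt : ∀ k, k < 2*t → dOdd1 t k < t := fun k hk => by
    simp only [dOdd1]; split_ifs <;> omega
  have hd2lt : ∀ k, k < 2*t → dOdd2 t k < t := fun k hk => by
    simp only [dOdd2]; split_ifs <;> omega
  have hnextlt : ∀ k, k < 2*t → (if k+1 = 2*t then 0 else k+1) < 2*t := fun k hk => by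
    split <;> omega
  refine ⟨fun i => (v ((dOdd1 t i.val : ℕ) : ZMod t), b1Even t i.val),
          fun i => (v ((dOdd2 t i.val : ℕ) : ZMod t), bOdd2 t i.val),
          ?_, ?_, ?_, ?_, ?_, ?_, ?_, ?_, ?_⟩
  · -- injectivity of c₁
    intro i i' h
    rw [Prod.ext_iff] at h
    obtain ⟨h1, h2⟩ := h
    have hm := ZMod.val_lt i; have hm' := ZMod.val_lt i'
    have hd := castt_inj (hd1lt _ hm) (hd1lt _ hm') (hinj h1)
    apply ZMod.val_injective
    simp only [dOdd1, b1Even, decide_eq_decide] at hd h2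
    split_ifs at hd <;> omega
  · -- injectivity of c₂
    intro i i' h
    rw [Prod.ext_iff] at h
    obtain ⟨h1, h2⟩ := h
    have hm := ZMod.val_lt i; have hm' := ZMod.val_lt i'
    have hd := castt_inj (hd2lt _ hm) (hd2lt _ hm') (hinj h1)
    apply ZMod.val_injective
    replace h2 := iff_of_eq (congrArg (· = true) h2)
    simp only [bOdd2, dOdd2] at hd h2
    split_ifs at hd h2 <;>
      first
        | contradiction
        | (simp only [decide_eq_true_eq, eq_self_iff_true, iff_true, true_iff] at h2; omega)
        | omega
  · exact fun i => step_mult mult hsymm hcyc (stepOdd1 ht) i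
  · exact fun i => step_mult mult hsymm hcyc (stepOdd2 ht) i
  · -- edge-disjointness
    intro i j h
    have hm := ZMod.val_lt i; have hn := ZMod.val_lt j
    have hm1 := hnextlt _ hm; have hn1 := hnextlt _ hn
    dsimp only at h
    rw [val_next i, val_next j, Sym2.eq_iff] at h
    set m' := if i.val + 1 = 2*t then 0 else i.val + 1 with hm'def
    set n' := if j.val + 1 = 2*t then 0 else j.val + 1 with hn'def
    have hm'c : m' = i.val+1 ∧ i.val+1 < 2*t ∨ m' = 0 ∧ i.val+1 = 2*t := by
      rw [hm'def]; split <;> omega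
    have hn'c : n' = j.val+1 ∧ j.val+1 < 2*t ∨ n' = 0 ∧ j.val+1 = 2*t := by
      rw [hn'def]; split <;> omega
    rcases h with ⟨h1, h2⟩ | ⟨h1, h2⟩ <;> rw [Prod.ext_iff] at h1 h2
    · obtain ⟨hv1, hb1⟩ := h1; obtain ⟨hv2, hb2⟩ := h2
      have e1 := castt_inj (hd1lt _ hm) (hd2lt _ hn) (hinj hv1)
      have e2 := castt_inj (hd1lt _ hm1) (hd2lt _ hn1) (hinj hv2)
      replace hb1 := iff_of_eq (congrArg (· = true) hb1)
      replace hb2 := iff_of_eq (congrArg (· = true) hb2)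
      simp only [b1Even, decide_eq_true_eq] at hb1 hb2
      exact disjOddA ht hpar hm hn hm'c hn'c e1 e2 hb1 hb2
    · obtain ⟨hv1, hb1⟩ := h1; obtain ⟨hv2, hb2⟩ := h2
      have e1 := castt_inj (hd1lt _ hm) (hd2lt _ hn1) (hinj hv1)
      have e2 := castt_inj (hd1lt _ hm1) (hd2lt _ hn) (hinj hv2)
      replace hb1 := iff_of_eq (congrArg (· = true) hb1)
      replace hb2 := iff_of_eq (congrArg (· = true) hb2)
      simp only [b1Even, decide_eq_true_eq] at hb1 hb2
      exact disjOddB ht hpar hm hn hm'c hn'c e1 e2 hb1 hb2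
  · exact fun i => ⟨((eOdd1 t i.val : ℕ) : ZMod t), step_edge (stepOdd1 ht) i⟩
  · exact fun i => ⟨((eOdd2 t i.val : ℕ) : ZMod t), step_edge (stepOdd2 ht) i⟩
  · exact fun j => step_count ht hinj (stepOdd1 ht) (fun jv => t - 1 - jv) (fun jv => jv + t)
      (fibOdd1 ht) (fun jv hjv => show t - 1 - jv < 2*t by omega)
      (fun jv hjv => show jv + t < 2*t by omega)
      (fun jv hjv => show t - 1 - jv ≠ jv + t by omega) j
  · exact fun j => step_count ht hinj (stepOdd2 ht) (fun jv => jv) (fun jv => 2*t - 1 - jv)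
      (fibOdd2 ht) (fun jv hjv => show jv < 2*t by omega)
      (fun jv hjv => show 2*t - 1 - jv < 2*t by omega)
      (fun jv hjv => show jv ≠ 2*t - 1 - jv by omega) j

end Helpers

/-- Every cycle `v₁…v_t` (`t ≥ 3`) in a multigraph `R` (given by an edge-multiplicity
function `mult`) gives rise, after splitting each vertex into two copies (vertex set
`V × Bool`), to two edge-disjoint cycles in the split multigraph `R*`, each of even
length `2t`, whose edges project onto the edges of the original cycle, each original
edge being covered exactly twice by the projection of each new cycle. -/
theorem stmt_13 {V : Type} [DecidableEq V] (t : ℕ) [NeZero t] [NeZero (2*t)]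
    (ht : 3 ≤ t)
    (mult : V → V → ℕ) (hsymm : ∀ u v, mult u v = mult v u)
    (hloop : ∀ v, mult v v = 0)
    (v : ZMod t → V) (hinj : Function.Injective v)
    (hcyc : ∀ i, 0 < mult (v i) (v (i+1))) :
    ∃ c₁ c₂ : ZMod (2*t) → V × Bool,
      Function.Injective c₁ ∧ Function.Injective c₂ ∧
      (∀ i, 0 < mult (c₁ i).1 (c₁ (i+1)).1) ∧
      (∀ i, 0 < mult (c₂ i).1 (c₂ (i+1)).1) ∧
      (∀ i j, s(c₁ i, c₁ (i+1)) ≠ s(c₂ j, c₂ (j+1))) ∧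
      (∀ i, ∃ j, s((c₁ i).1, (c₁ (i+1)).1) = s(v j, v (j+1))) ∧
      (∀ i, ∃ j, s((c₂ i).1, (c₂ (i+1)).1) = s(v j, v (j+1))) ∧
      (∀ j : ZMod t, (Finset.univ.filter
          (fun i : ZMod (2*t) =>
            s((c₁ i).1, (c₁ (i+1)).1) = s(v j, v (j+1)))).card = 2) ∧
      (∀ j : ZMod t, (Finset.univ.filter
          (fun i : ZMod (2*t) =>
            s((c₂ i).1, (c₂ (i+1)).1) = s(v j, v (j+1)))).card = 2) := by
  rcases Nat.even_or_odd t with he | ho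
  · exact even_case ht (Nat.even_iff.mp he) mult hsymm v hinj hcyc
  · exact odd_case ht (Nat.odd_iff.mp ho) mult hsymm v hinj hcyc
end

section
/- Every regular multigraph of positive even degree contains a 2-factor (Petersen's Theorem). Consequently, an r-regular multigraph with r even can be decomposed into r/2 edge-disjoint 2-factors. -/
/-!
Split off two edges `wa`, `wb` at a vertex `w` and replace them by the edge `ab`: all degrees
stay even, so by induction the smaller multigraph has an Eulerian orientation, and rerouting the
oriented edge `a → b` as `a → w → b` orients the original one.

In a `2k`-regular multigraph an Eulerian orientation has all in- and out-degrees equal to `k`, so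
by Hall's theorem there is a permutation `σ` such that every `v → σ v` is an oriented edge. The
edges `v σ(v)` form a 2-factor: when `σ u = v` and `σ v = u` they are two distinct parallel edges,
oriented in opposite directions. Removing the 2-factor leaves a `2(k - 1)`-regular multigraph.
-/

open Finset

namespace Multigraph

variable {V : Type*} [DecidableEq V]

def arc (x y : V) : V → V → ℕ := fun u v => if u = x ∧ v = y then 1 else 0

def edge (x y : V) : V → V → ℕ := arc x y + arc y x

lemma arc_swap_apply (x y u v : V) : arc x y v u = arc y x u v := by
  simp only [arc, and_comm]

lemma edge_comm (x y : V) : edge x y = edge y x := add_comm _ _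

lemma edge_swap_apply (x y u v : V) : edge x y v u = edge x y u v := by
  simp only [edge, Pi.add_apply, arc_swap_apply, add_comm]

lemma edge_apply_self {x y : V} (hxy : x ≠ y) (v : V) : edge x y v v = 0 := by
  by_cases hv : v = x <;> simp [edge, arc, hv, hxy]

lemma arc_le_of_one_le {o : V → V → ℕ} {x y : V} (h : 1 ≤ o x y) : arc x y ≤ o := fun u v => by
  simp only [arc]
  split_ifs with huv
  · exact huv.1 ▸ huv.2 ▸ h
  · exact Nat.zero_le _

variable [Fintype V]

lemma sum_arc_left (x y v : V) : ∑ u, arc x y v u = if v = x then 1 else 0 := by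
  by_cases h : v = x <;> simp [arc, h]

lemma sum_arc_right (x y v : V) : ∑ u, arc x y u v = if v = y then 1 else 0 := by
  by_cases h : v = y <;> simp [arc, h]

lemma sum_edge (x y v : V) :
    ∑ u, edge x y v u = (if v = x then 1 else 0) + if v = y then 1 else 0 := by
  simp only [edge, Pi.add_apply, sum_add_distrib, sum_arc_left]

lemma sum_sum_edge (x y : V) : ∑ v, ∑ u, edge x y v u = 2 := by
  simp [sum_edge, sum_add_distrib]

/-- Of the `m u v` edges between `u` and `v`, `o u v` are oriented from `u` to `v`. -/
structure IsEulerianOrientation (o m : V → V → ℕ) : Prop where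
  add_swap : ∀ u v, o u v + o v u = m u v
  sum_out_eq_sum_in : ∀ v, ∑ u, o v u = ∑ u, o u v

namespace IsEulerianOrientation

variable {o o' m m' : V → V → ℕ}

omit [DecidableEq V] in
lemma add (h : IsEulerianOrientation o m) (h' : IsEulerianOrientation o' m') :
    IsEulerianOrientation (o + o') (m + m') where
  add_swap u v := by simp only [Pi.add_apply, ← h.add_swap, ← h'.add_swap]; ring
  sum_out_eq_sum_in v := by
    simp only [Pi.add_apply, sum_add_distrib, h.sum_out_eq_sum_in, h'.sum_out_eq_sum_in]

lemma arc_add_arc (x y : V) :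
    IsEulerianOrientation (arc x y + arc y x) (edge x y + edge x y) where
  add_swap u v := by
    simp only [edge, Pi.add_apply, arc_swap_apply x y u v, arc_swap_apply y x u v]
    ring
  sum_out_eq_sum_in v := by
    simp only [Pi.add_apply, sum_add_distrib, sum_arc_left, sum_arc_right]
    ring

lemma reroute {p n : V → V → ℕ} {a b : V} (h : IsEulerianOrientation (p + arc a b) (n + edge a b))
    (w : V) : IsEulerianOrientation (p + arc a w + arc w b) (n + edge a w + edge w b) where
  add_swap u v := by
    have := h.add_swap u v
    simp only [edge, Pi.add_apply, arc_swap_apply _ _ u v] at this ⊢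
    omega
  sum_out_eq_sum_in v := by
    have := h.sum_out_eq_sum_in v
    simp only [Pi.add_apply, sum_add_distrib, sum_arc_left, sum_arc_right] at this ⊢
    omega

lemma exists_reroute {n : V → V → ℕ} {a b : V} (h : IsEulerianOrientation o (n + edge a b))
    (w : V) : ∃ o', IsEulerianOrientation o' (n + edge a w + edge w b) := by
  have hsum := h.add_swap a b
  simp only [Pi.add_apply, edge, arc, and_self, if_true] at hsum
  by_cases hoab : 1 ≤ o a b
  · rw [← tsub_add_cancel_of_le (arc_le_of_one_le hoab)] at h
    exact ⟨_, h.reroute w⟩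
  · rw [← tsub_add_cancel_of_le (arc_le_of_one_le (by omega : 1 ≤ o b a)), edge_comm] at h
    have := h.reroute w
    rw [add_right_comm n, edge_comm b w, edge_comm w a] at this
    exact ⟨_, this⟩

end IsEulerianOrientation

omit [DecidableEq V] in
lemma exists_ne_ne_zero_of_even_sum {f : V → ℕ} (hf : Even (∑ u, f u)) {a : V} (ha : f a = 1) :
    ∃ b, b ≠ a ∧ f b ≠ 0 := by
  by_contra! h
  rw [sum_eq_single a (fun b _ hb => h b hb) (by simp), ha] at hf
  exact Nat.not_even_one hf

lemma exists_eq_add_edge_add_edge {m : V → V → ℕ} (hsymm : ∀ u v, m u v = m v u)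
    (hloop : ∀ v, m v v = 0) {w a : V} (heven : Even (∑ u, m w u)) (hwa : m w a ≠ 0) :
    ∃ b n, m = n + edge w a + edge w b := by
  obtain ⟨b, hb⟩ : ∃ b, (if b = a then 2 else 1) ≤ m w b := by
    by_cases h2 : 2 ≤ m w a
    · exact ⟨a, by simpa⟩
    · obtain ⟨b, hba, hb⟩ := exists_ne_ne_zero_of_even_sum heven (by omega : m w a = 1)
      exact ⟨b, by simp only [hba, if_false]; omega⟩
  have hle : edge w a + edge w b ≤ m := fun u v => by
    have := hsymm w a; have := hsymm w b; have := hloop w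
    simp only [edge, arc, Pi.add_apply]
    split_ifs at hb ⊢ <;> grind
  exact ⟨b, m - (edge w a + edge w b), by rw [add_assoc, tsub_add_cancel_of_le hle]⟩

theorem exists_isEulerianOrientation {m : V → V → ℕ} (hsymm : ∀ u v, m u v = m v u)
    (hloop : ∀ v, m v v = 0) (heven : ∀ v, Even (∑ u, m v u)) :
    ∃ o, IsEulerianOrientation o m := by
  induction hN : ∑ v, ∑ u, m v u using Nat.strong_induction_on generalizing m with
  | _ N ih =>
  obtain hm | ⟨w, a, hwa⟩ : m = 0 ∨ ∃ w a, m w a ≠ 0 := by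
    by_contra! h
    exact h.1 (funext₂ h.2)
  · subst hm
    exact ⟨0, ⟨fun _ _ => rfl, fun _ => rfl⟩⟩
  obtain ⟨b, n, rfl⟩ := exists_eq_add_edge_add_edge hsymm hloop (heven w) hwa
  simp only [Pi.add_apply, sum_add_distrib, sum_sum_edge] at hN
  simp only [Pi.add_apply, sum_add_distrib, sum_edge] at hsymm hloop heven
  have hn_symm : ∀ u v, n u v = n v u := fun u v => by
    have := hsymm u v
    rw [edge_swap_apply w a, edge_swap_apply w b] at this
    omega
  have hn_loop : ∀ v, n v v = 0 := fun v => by have := hloop v; omega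
  by_cases hab : a = b
  · -- `m w a ≥ 2`: remove two parallel edges and orient them as a 2-cycle
    subst hab
    have hn_even : ∀ v, Even (∑ u, n v u) := fun v => by
      have := heven v; rw [Nat.even_iff] at this ⊢; omega
    obtain ⟨o, ho⟩ := ih _ (by omega) hn_symm hn_loop hn_even rfl
    exact ⟨o + (arc w a + arc a w), by rw [add_assoc]; exact ho.add (.arc_add_arc w a)⟩
  · have hm'_symm : ∀ u v, (n + edge a b) u v = (n + edge a b) v u := fun u v => by
      simp only [Pi.add_apply, hn_symm u v, edge_swap_apply]
    have hm'_loop : ∀ v, (n + edge a b) v v = 0 := fun v => by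
      simp only [Pi.add_apply, hn_loop, edge_apply_self hab, add_zero]
    have hm'_even : ∀ v, Even (∑ u, (n + edge a b) v u) := fun v => by
      have := heven v
      simp only [Pi.add_apply, sum_add_distrib, sum_edge]
      rw [Nat.even_iff] at this ⊢; omega
    obtain ⟨o, ho⟩ := ih _ (by simp only [Pi.add_apply, sum_add_distrib, sum_sum_edge]; omega)
      hm'_symm hm'_loop hm'_even rfl
    obtain ⟨o', ho'⟩ := ho.exists_reroute w
    rw [edge_comm a w] at ho'
    exact ⟨o', ho'⟩

omit [DecidableEq V] in
theorem exists_perm_pos_of_sum_eq {o : V → V → ℕ} {k : ℕ} (hk : 0 < k)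
    (hrow : ∀ v, ∑ u, o v u = k) (hcol : ∀ u, ∑ v, o v u = k) :
    ∃ σ : Equiv.Perm V, ∀ v, 0 < o v (σ v) := by
  classical
  let t : V → Finset V := fun v => {u | 0 < o v u}
  have hall (s : Finset V) : #s ≤ #(s.biUnion t) := by
    have hrow' : ∀ v ∈ s, ∑ u ∈ s.biUnion t, o v u = k := fun v hv => by
      rw [← hrow v]
      refine sum_subset (subset_univ _) fun u _ hu => ?_
      by_contra h
      exact hu (mem_biUnion.2 ⟨v, hv, by simpa [t] using Nat.pos_of_ne_zero h⟩)
    refine Nat.le_of_mul_le_mul_right ?_ hk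
    calc #s * k = ∑ v ∈ s, ∑ u ∈ s.biUnion t, o v u := by
          rw [sum_congr rfl hrow', sum_const, smul_eq_mul]
      _ = ∑ u ∈ s.biUnion t, ∑ v ∈ s, o v u := sum_comm
      _ ≤ ∑ u ∈ s.biUnion t, ∑ v, o v u :=
          sum_le_sum fun u _ => sum_le_sum_of_subset (subset_univ s)
      _ = #(s.biUnion t) * k := by rw [sum_congr rfl fun u _ => hcol u, sum_const, smul_eq_mul]
  obtain ⟨f, hf, hft⟩ := (all_card_le_biUnion_card_iff_exists_injective t).1 hall
  exact ⟨.ofBijective f (Finite.injective_iff_bijective.1 hf), fun v => by simpa [t] using hft v⟩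

theorem exists_twoFactor_le {m : V → V → ℕ} (hsymm : ∀ u v, m u v = m v u)
    (hloop : ∀ v, m v v = 0) {k : ℕ} (hk : 0 < k) (hdeg : ∀ v, ∑ u, m v u = 2 * k) :
    ∃ f : V → V → ℕ, (∀ u v, f u v ≤ m u v) ∧ (∀ u v, f u v = f v u) ∧ (∀ v, f v v = 0) ∧
      ∀ v, ∑ u, f v u = 2 := by
  obtain ⟨o, ho⟩ := exists_isEulerianOrientation hsymm hloop fun v => ⟨k, by rw [hdeg]; ring⟩
  have hout (v : V) : ∑ u, o v u = k := by
    have := hdeg v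
    simp only [← ho.add_swap, sum_add_distrib, ← ho.sum_out_eq_sum_in] at this
    omega
  obtain ⟨σ, hσ⟩ := exists_perm_pos_of_sum_eq hk hout
    fun v => (ho.sum_out_eq_sum_in v).symm.trans (hout v)
  let P : V → V → ℕ := fun u v => if σ u = v then 1 else 0
  have hP (u v : V) : P u v ≤ o u v := by
    simp only [P]
    split_ifs with h
    · exact h ▸ hσ u
    · exact Nat.zero_le _
  have hle (u v : V) : P u v + P v u ≤ m u v := ho.add_swap u v ▸ add_le_add (hP u v) (hP v u)
  refine ⟨fun u v => P u v + P v u, hle, fun u v => add_comm _ _, fun v => ?_, fun v => ?_⟩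
  · have := hle v v
    rw [hloop] at this
    exact Nat.eq_zero_of_le_zero this
  · have hcol : ∑ u, P u v = 1 :=
      (Equiv.sum_comp σ fun w => if w = v then 1 else 0).trans (by simp)
    simp only [sum_add_distrib, hcol, P, sum_ite_eq, mem_univ, if_true]

theorem exists_twoFactor_decomposition (k : ℕ) {m : V → V → ℕ}
    (hsymm : ∀ u v, m u v = m v u) (hloop : ∀ v, m v v = 0) (hdeg : ∀ v, ∑ u, m v u = 2 * k) :
    ∃ f : Fin k → V → V → ℕ, (∀ i u v, f i u v = f i v u) ∧ (∀ i v, f i v v = 0) ∧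
      (∀ i v, ∑ u, f i v u = 2) ∧ ∀ u v, ∑ i, f i u v = m u v := by
  induction k generalizing m with
  | zero =>
    refine ⟨Fin.elim0, (·.elim0), (·.elim0), (·.elim0), fun u v => ?_⟩
    simpa using (sum_eq_zero_iff.1 (hdeg u) v (mem_univ v)).symm
  | succ k ih =>
    obtain ⟨f₀, hle, hsymm₀, hloop₀, hdeg₀⟩ := exists_twoFactor_le hsymm hloop k.succ_pos hdeg
    obtain ⟨f, hsymmf, hloopf, hdegf, hsumf⟩ := ih (m := m - f₀)
      (fun u v => by simp only [Pi.sub_apply, hsymm u v, hsymm₀ u v])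
      (fun v => by simp only [Pi.sub_apply, hloop, zero_tsub])
      (fun v => by
        simp only [Pi.sub_apply]
        rw [sum_tsub_distrib _ fun u _ => hle v u, hdeg, hdeg₀]
        omega)
    refine ⟨Fin.cons f₀ f, ?_, ?_, ?_, fun u v => ?_⟩
    · simpa [Fin.forall_fin_succ] using ⟨hsymm₀, hsymmf⟩
    · simpa [Fin.forall_fin_succ] using ⟨hloop₀, hloopf⟩
    · simpa [Fin.forall_fin_succ] using ⟨hdeg₀, hdegf⟩
    · rw [Fin.sum_univ_succ]
      simp only [Fin.cons_zero, Fin.cons_succ, hsumf, Pi.sub_apply]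
      exact Nat.add_sub_cancel' (hle u v)

end Multigraph

/-- Petersen's Theorem for multigraphs: every regular multigraph of positive even
degree contains a 2-factor; consequently an `r`-regular multigraph with `r` even can
be decomposed into `r/2` edge-disjoint 2-factors. Multigraphs are given by symmetric
loopless edge-multiplicity functions. -/
theorem stmt_15 {V : Type} [Fintype V] [DecidableEq V] (mult : V → V → ℕ) (r : ℕ)
    (hsymm : ∀ u v, mult u v = mult v u) (hloop : ∀ v, mult v v = 0)
    (hreg : ∀ v, ∑ u, mult v u = r) (hpos : 0 < r) (heven : Even r) :
    (∃ m₂ : V → V → ℕ,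
      (∀ u v, m₂ u v ≤ mult u v) ∧ (∀ u v, m₂ u v = m₂ v u) ∧
      (∀ v, m₂ v v = 0) ∧ (∀ v, ∑ u, m₂ v u = 2)) ∧
    (∃ f : Fin (r/2) → V → V → ℕ,
      (∀ i u v, f i u v = f i v u) ∧
      (∀ i v, f i v v = 0) ∧
      (∀ i v, ∑ u, f i v u = 2) ∧
      (∀ u v, ∑ i, f i u v = mult u v)) := by
  obtain ⟨k, rfl⟩ := heven
  have hdeg (v : V) : ∑ u, mult v u = 2 * k := by rw [hreg, two_mul]
  refine ⟨Multigraph.exists_twoFactor_le hsymm hloop (by omega) hdeg, ?_⟩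
  rw [show (k + k) / 2 = k by omega]
  exact Multigraph.exists_twoFactor_decomposition k hsymm hloop hdeg
end

section
/- Let G be a graph on n vertices with minimum degree δ(G) and let R be obtained from an application of the degree form of the regularity lemma with parameters ε, d (giving reduced partition V₀, V₁, …, V_k with |V₀| ≤ εn, |V₁| = ⋯ = |V_k| = m, and pure graph G′ with d_{G′}(v) ≥ d_G(v) − (d+ε)n), where R is the multigraph on {V₁,…,V_k} with ⌊d_{G′}(Vᵢ,Vⱼ)/β⌋ parallel edges between Vᵢ and Vⱼ. If ε, β ≪ d, then R has minimum degree at least (δ(G)/n − 2d)·k/β. -/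
/-!
Double count the `G'`-edges leaving a cluster `Vᵢ`. From below, every vertex of `Vᵢ` has
`G'`-degree at least `δ(G) − (d + ε)n`. From above, a vertex of `Vᵢ` has no `G'`-neighbour in
`Vᵢ`, so its neighbours lie in `V₀` (at most `εn` of them) or in other clusters, and by the
definition of the floor the `G'`-edges between `Vᵢ` and `Vⱼ` number fewer than
`β m² (e_R(Vᵢ, Vⱼ) + 1)`. Comparing the two bounds and using `mk ≤ n` and `2ε + β ≤ d` gives
the degree bound in `R`.
-/

open Finset

namespace SimpleGraph

variable {V ι : Type*} [Fintype V] (G : SimpleGraph V) [DecidableRel G.Adj]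

theorem sum_degree_eq_card_interedges_univ (s : Finset V) :
    ∑ x ∈ s, G.degree x = #(G.interedges s univ) := by
  rw [interedges_def, card_filter, sum_product]
  refine sum_congr rfl fun x _ => ?_
  rw [← card_neighborFinset_eq_degree, neighborFinset_eq_filter, card_filter]

theorem card_interedges_univ_le [DecidableEq V] [Fintype ι] [DecidableEq ι]
    (P : ι → Finset V) (i : ι) (hP : ∀ u ∈ P i, ∀ w ∈ P i, ¬ G.Adj u w) :
    #(G.interedges (P i) univ) ≤
      #(P i) * #(univ \ univ.biUnion P) + ∑ j ∈ univ.erase i, #(G.interedges (P i) (P j)) := by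
  have hsub : G.interedges (P i) univ ⊆
      G.interedges (P i) (univ \ univ.biUnion P) ∪
        (univ.erase i).biUnion fun j => G.interedges (P i) (P j) := by
    rintro ⟨u, w⟩ huw
    obtain ⟨hu, -, hadj⟩ := G.mem_interedges_iff.1 huw
    by_cases hw : w ∈ univ.biUnion P
    · obtain ⟨j, -, hwj⟩ := mem_biUnion.1 hw
      have hji : j ≠ i := by
        rintro rfl
        exact hP u hu w hwj hadj
      exact mem_union_right _ <| mem_biUnion.2
        ⟨j, mem_erase.2 ⟨hji, mem_univ j⟩, G.mk_mem_interedges_iff.2 ⟨hu, hwj, hadj⟩⟩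
    · exact mem_union_left _ <| G.mk_mem_interedges_iff.2 ⟨hu, mem_sdiff.2 ⟨mem_univ w, hw⟩, hadj⟩
  calc #(G.interedges (P i) univ)
      ≤ #(G.interedges (P i) (univ \ univ.biUnion P)) +
          #((univ.erase i).biUnion fun j => G.interedges (P i) (P j)) :=
        (card_le_card hsub).trans (card_union_le _ _)
    _ ≤ _ := add_le_add (G.card_interedges_le_mul _ _) card_biUnion_le

end SimpleGraph

theorem sum_le_mul_sum_floor_div_add_card {ι : Type*} (s : Finset ι) (a : ι → ℝ) {β : ℝ}
    (hβ : 0 < β) : ∑ j ∈ s, a j ≤ β * (∑ j ∈ s, (⌊a j / β⌋ : ℝ) + #s) := by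
  have h : ∀ j ∈ s, a j ≤ β * ((⌊a j / β⌋ : ℝ) + 1) := fun j _ =>
    (div_le_iff₀' hβ).1 (Int.lt_floor_add_one _).le
  calc ∑ j ∈ s, a j ≤ ∑ j ∈ s, β * ((⌊a j / β⌋ : ℝ) + 1) := sum_le_sum h
    _ = _ := by rw [← mul_sum, sum_add_distrib, sum_const, nsmul_one]

theorem degree_bound_of_double_count {n k m ε β d δ S : ℝ} (hn : 0 < n) (hm : 0 < m) (hk : 0 ≤ k)
    (hβ : 0 < β) (hS : 0 ≤ S) (hεβ : 2 * ε + β ≤ d) (hmk : m * k ≤ n)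
    (h : m * (δ - (d + ε) * n) ≤ m * (ε * n) + β * m ^ 2 * (S + k)) :
    (δ / n - 2 * d) * (k / β) ≤ S := by
  have h₁ : δ - (d + ε) * n ≤ ε * n + β * m * (S + k) :=
    le_of_mul_le_mul_left (by linarith) hm
  have h₂ : (δ - 2 * d * n) * k ≤ β * n * S := by
    nlinarith [mul_le_mul_of_nonneg_right h₁ hk,
      mul_le_mul_of_nonneg_left hmk (by positivity : 0 ≤ β * S),
      mul_le_mul_of_nonneg_left hmk (by positivity : 0 ≤ β * k),
      mul_nonneg (mul_nonneg hn.le hk) (by linarith : 0 ≤ d - 2 * ε - β)]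
  rw [show (δ / n - 2 * d) * (k / β) = (δ - 2 * d * n) * k / (β * n) by field_simp,
    div_le_iff₀ (by positivity)]
  linarith

theorem stmt_16_general (n k m : ℕ) (ε β d : ℝ)
    (hn : 0 < n) (hm : 0 < m)
    (hεd : ε ≤ d / 8) (hβ : 0 < β) (hβd : β ≤ d / 8)
    (hmk₂ : m * k ≤ n)
    (G G' : SimpleGraph (Fin n)) [DecidableRel G.Adj] [DecidableRel G'.Adj]
    (P : Fin k → Finset (Fin n))
    (hPcard : ∀ i, (P i).card = m)
    (hV0 : ((Finset.univ \ Finset.univ.biUnion P).card : ℝ) ≤ ε * n)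
    (hdeg : ∀ v, (G.degree v : ℝ) - (d + ε) * n ≤ (G'.degree v : ℝ))
    (hempty : ∀ i, ∀ u ∈ P i, ∀ w ∈ P i, ¬ G'.Adj u w) :
    ∀ i, ((G.minDegree : ℝ) / n - 2 * d) * ((k : ℝ) / β) ≤
      ((∑ j ∈ Finset.univ.erase i,
        ⌊(((G'.interedges (P i) (P j)).card : ℝ) / (m : ℝ)^2) / β⌋ : ℤ) : ℝ) := by
  intro i
  have hm' : (0 : ℝ) < m := by exact_mod_cast hm
  have hlow := card_nsmul_le_sum (P i) (fun x => (G'.degree x : ℝ))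
    (G.minDegree - (d + ε) * n) fun x _ => by
      linarith [hdeg x, (Nat.cast_le (α := ℝ)).2 (G.minDegree_le_degree x)]
  rw [hPcard, nsmul_eq_mul] at hlow
  have hfloor := sum_le_mul_sum_floor_div_add_card (univ.erase i)
    (fun j => (#(G'.interedges (P i) (P j)) : ℝ) / (m : ℝ) ^ 2) hβ
  rw [← sum_div, div_le_iff₀ (by positivity)] at hfloor
  have hup : ∑ x ∈ P i, (G'.degree x : ℝ) ≤
      m * (ε * n) + β * m ^ 2 *
        (∑ j ∈ univ.erase i, (⌊(#(G'.interedges (P i) (P j)) : ℝ) / (m : ℝ) ^ 2 / β⌋ : ℝ) + k) := by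
    have hcount := (G'.sum_degree_eq_card_interedges_univ (P i)).trans_le
      (G'.card_interedges_univ_le P i (hempty i))
    rw [hPcard] at hcount
    have hcard : β * m ^ 2 * #(univ.erase i) ≤ β * m ^ 2 * k :=
      mul_le_mul_of_nonneg_left (by simp) (by positivity)
    have hcount' := (Nat.cast_le (α := ℝ)).2 hcount
    push_cast at hcount'
    linarith [mul_le_mul_of_nonneg_left hV0 hm'.le]
  push_cast
  exact degree_bound_of_double_count (by exact_mod_cast hn) hm' (Nat.cast_nonneg k) hβ
    (sum_nonneg fun j _ => by positivity) (by linarith) (by exact_mod_cast hmk₂) (hlow.trans hup)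

/-- Degree bound for the reduced multigraph of the regularity lemma: with clusters
`P 0, …, P (k-1)` of size `m`, exceptional set of size at most `εn`, pure graph
`G' ≤ G` with `d_{G'}(v) ≥ d_G(v) − (d+ε)n`, no `G'`-edges inside clusters, and
where the reduced multigraph `R` has `⌊density(Vᵢ,Vⱼ)/β⌋` parallel edges between
clusters `Vᵢ` and `Vⱼ`, the minimum degree of `R` is at least
`(δ(G)/n − 2d)·k/β` (provided `ε, β ≤ d/8` and `(1−ε)n ≤ mk ≤ n`). -/
theorem stmt_16 (n k m : ℕ) (ε β d : ℝ)
    (hn : 0 < n) (hk : 0 < k) (hm : 0 < m)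
    (hε : 0 < ε) (hεd : ε ≤ d / 8) (hβ : 0 < β) (hβd : β ≤ d / 8) (hd : 0 < d)
    (hmk₁ : (1 - ε) * n ≤ (m : ℝ) * k) (hmk₂ : m * k ≤ n)
    (G G' : SimpleGraph (Fin n)) [DecidableRel G.Adj] [DecidableRel G'.Adj]
    (P : Fin k → Finset (Fin n))
    (hPcard : ∀ i, (P i).card = m)
    (hPdisj : ∀ i j, i ≠ j → Disjoint (P i) (P j))
    (hV0 : ((Finset.univ \ Finset.univ.biUnion P).card : ℝ) ≤ ε * n)
    (hsub : G' ≤ G)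
    (hdeg : ∀ v, (G.degree v : ℝ) - (d + ε) * n ≤ (G'.degree v : ℝ))
    (hempty : ∀ i, ∀ u ∈ P i, ∀ w ∈ P i, ¬ G'.Adj u w) :
    ∀ i, ((G.minDegree : ℝ) / n - 2 * d) * ((k : ℝ) / β) ≤
      ((∑ j ∈ Finset.univ.erase i,
        ⌊(((G'.interedges (P i) (P j)).card : ℝ) / (m : ℝ)^2) / β⌋ : ℤ) : ℝ) :=
  stmt_16_general n k m ε β d hn hm hεd hβ hβd hmk₂ G G' P hPcard hV0 hdeg hempty
end
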